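/- arXiv:1303.0592 — 9 statements merged into one kernel-verified Lean document; each statement's English description precedes it below -/
import Mathlib

section
/- For α > 0 and integer β ≥ 2, the integral I(α,β) = ∫_0^∞ e^{-αx}/(1+x)^β dx satisfies I(α,β) = ((-1)^{β-1} α^{β-1} e^α E_1(α))/(β-1)! + Σ_{i=1}^{β-1} ((i-1)!/(β-1)!)·(-1)^{β-i-1}·α^{β-i-1}, where E_1(α) = ∫_α^∞ e^{-t}/t dt. -/
/-!
Write `I β = ∫_0^∞ e^{-αx}/(1+x)^β dx`. Integrating the derivative of `e^{-αx}/(1+x)^β` over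
`(0, ∞)` gives `α I β + β I (β+1) = 1`, and the substitution `t = α(1+x)` gives
`I 1 = e^α E₁(α)`. Hence `a n = n! I (n+1)` solves `a (n+1) = -α a n + n!`, which unrolls to
`a n = (-α)^n e^α E₁(α) + ∑_{k<n} (-α)^(n-1-k) k!`; dividing by `n!` is the closed form.
-/

open Finset Real MeasureTheory Set Filter

theorem integral_comp_add_right_Ioi {E : Type*} [NormedAddCommGroup E] [NormedSpace ℝ E]
    (g : ℝ → E) (a d : ℝ) : ∫ x in Ioi a, g (x + d) = ∫ x in Ioi (a + d), g x := by
  have := (measurePreserving_add_right volume d).setIntegral_preimage_emb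
    (measurableEmbedding_addRight d) g (Ioi (a + d))
  rwa [preimage_add_const_Ioi, add_sub_cancel_right] at this

theorem sum_Icc_one_eq_sum_range_succ {M : Type*} [AddCommMonoid M] (f : ℕ → M) (n : ℕ) :
    ∑ i ∈ Icc 1 n, f i = ∑ k ∈ range n, f (k + 1) := by
  rw [range_eq_Ico, sum_Ico_add', ← Finset.Ico_add_one_right_eq_Icc, zero_add]

theorem eq_pow_mul_add_sum_of_succ_eq {R : Type*} [CommSemiring R] {a c : ℕ → R} {r : R}
    (h : ∀ n, a (n + 1) = r * a n + c n) (n : ℕ) :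
    a n = r ^ n * a 0 + ∑ k ∈ range n, r ^ (n - 1 - k) * c k := by
  induction n with
  | zero => simp
  | succ n ih =>
    rw [h, ih, sum_range_succ, add_tsub_cancel_right, Nat.sub_self, pow_zero, one_mul, mul_add,
      ← mul_assoc, ← pow_succ', mul_sum, add_assoc]
    congr 2
    refine sum_congr rfl fun k hk => ?_
    rw [← mul_assoc, ← pow_succ']
    congr 2
    have := mem_range.mp hk
    omega

theorem exp_neg_mul_div_one_add_pow_le (α : ℝ) (β : ℕ) {x : ℝ} (hx : 0 ≤ x) :
    exp (-α * x) / (1 + x) ^ β ≤ exp (-α * x) :=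
  div_le_self (exp_nonneg _) (one_le_pow₀ (by linarith))

theorem integrableOn_exp_neg_mul_div_one_add_pow {α : ℝ} (hα : 0 < α) (β : ℕ) :
    IntegrableOn (fun x => exp (-α * x) / (1 + x) ^ β) (Ioi 0) := by
  refine (exp_neg_integrableOn_Ioi 0 hα).mono' ?_ ?_
  · exact (ContinuousOn.div (by fun_prop) (by fun_prop) fun x hx =>
      pow_ne_zero _ (by linarith [mem_Ioi.mp hx])).aestronglyMeasurable measurableSet_Ioi
  · refine (ae_restrict_iff' measurableSet_Ioi).mpr (ae_of_all _ fun x hx => ?_)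
    rw [norm_of_nonneg (div_nonneg (exp_nonneg _) (pow_nonneg (by linarith [mem_Ioi.mp hx]) _))]
    exact exp_neg_mul_div_one_add_pow_le α β (le_of_lt hx)

theorem tendsto_exp_neg_mul_div_one_add_pow_atTop {α : ℝ} (hα : 0 < α) (β : ℕ) :
    Tendsto (fun x => exp (-α * x) / (1 + x) ^ β) atTop (nhds 0) := by
  have hexp : Tendsto (fun x => exp (-α * x)) atTop (nhds 0) :=
    tendsto_exp_atBot.comp (tendsto_id.const_mul_atTop_of_neg (neg_neg_of_pos hα))
  refine tendsto_of_tendsto_of_tendsto_of_le_of_le' tendsto_const_nhds hexp ?_ ?_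
  · filter_upwards [eventually_ge_atTop 0] with x hx
    exact div_nonneg (exp_nonneg _) (pow_nonneg (by linarith) _)
  · filter_upwards [eventually_ge_atTop 0] with x hx
    exact exp_neg_mul_div_one_add_pow_le α β hx

theorem hasDerivAt_exp_neg_mul_div_one_add_pow (α : ℝ) (β : ℕ) {x : ℝ} (hx : 1 + x ≠ 0) :
    HasDerivAt (fun x => exp (-α * x) / (1 + x) ^ β)
      (-(α * (exp (-α * x) / (1 + x) ^ β) + β * (exp (-α * x) / (1 + x) ^ (β + 1)))) x := by
  have hexp : HasDerivAt (fun x => exp (-α * x)) (exp (-α * x) * -α) x :=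
    ((hasDerivAt_id x).const_mul (-α)).exp.congr_deriv (by simp)
  have hpow : HasDerivAt (fun x => (1 + x) ^ β) (β * (1 + x) ^ (β - 1) * 1) x :=
    ((hasDerivAt_id x).const_add 1).fun_pow β
  refine (hexp.fun_div hpow (pow_ne_zero β hx)).congr_deriv ?_
  rcases β with _ | β
  · simp [mul_comm]
  · rw [Nat.add_sub_cancel]
    push_cast
    field_simp
    ring

theorem integral_exp_neg_mul_div_one_add_pow_one {α : ℝ} (hα : 0 < α) :
    ∫ x in Ioi (0 : ℝ), exp (-α * x) / (1 + x) ^ 1 =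
      exp α * ∫ t in Ioi α, exp (-t) / t := by
  have hsubst : EqOn (fun x => exp (-α * x) / (1 + x) ^ 1)
      (fun x => exp α * (α * (exp (-(α * (x + 1))) / (α * (x + 1))))) (Ioi 0) := by
    intro x hx
    have : 0 < 1 + x := by linarith [mem_Ioi.mp hx]
    dsimp only
    rw [show -(α * (x + 1)) = -α * x + -α by ring, exp_add, exp_neg α, add_comm x]
    field_simp
  rw [setIntegral_congr_fun measurableSet_Ioi hsubst, integral_const_mul, integral_const_mul,
    integral_comp_add_right_Ioi (fun u => exp (-(α * u)) / (α * u)), zero_add,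
    integral_comp_mul_left_Ioi (fun t => exp (-t) / t) 1 hα, mul_one, smul_eq_mul,
    mul_inv_cancel_left₀ hα.ne']

theorem mul_integral_add_mul_integral_succ {α : ℝ} (hα : 0 < α) (β : ℕ) :
    α * (∫ x in Ioi (0 : ℝ), exp (-α * x) / (1 + x) ^ β)
      + β * ∫ x in Ioi (0 : ℝ), exp (-α * x) / (1 + x) ^ (β + 1) = 1 := by
  have hint := fun n => integrableOn_exp_neg_mul_div_one_add_pow hα n
  have hftc := integral_Ioi_of_hasDerivAt_of_tendsto'
    (fun x hx => hasDerivAt_exp_neg_mul_div_one_add_pow α β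
      (by linarith [mem_Ici.mp hx] : 1 + x ≠ 0))
    (((hint β).const_mul α).add ((hint (β + 1)).const_mul β)).neg
    (tendsto_exp_neg_mul_div_one_add_pow_atTop hα β)
  rw [integral_neg, integral_add ((hint β).const_mul α) ((hint (β + 1)).const_mul β),
    integral_const_mul, integral_const_mul, mul_zero, exp_zero, add_zero, one_pow, div_one]
    at hftc
  linarith

theorem factorial_mul_integral_exp_neg_mul_div_one_add_pow_succ {α : ℝ} (hα : 0 < α) (n : ℕ) :
    (n.factorial : ℝ) * ∫ x in Ioi (0 : ℝ), exp (-α * x) / (1 + x) ^ (n + 1) =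
      (-α) ^ n * (exp α * ∫ t in Ioi α, exp (-t) / t) +
        ∑ k ∈ range n, (-α) ^ (n - 1 - k) * k.factorial := by
  have hrec (m : ℕ) := mul_integral_add_mul_integral_succ hα (m + 1)
  have := eq_pow_mul_add_sum_of_succ_eq (r := -α) (c := fun k => (k.factorial : ℝ))
    (a := fun n => (n.factorial : ℝ) * ∫ x in Ioi (0 : ℝ), exp (-α * x) / (1 + x) ^ (n + 1))
    (fun n => by
      rw [Nat.factorial_succ]
      push_cast at hrec ⊢
      linear_combination (n.factorial : ℝ) * hrec n) n
  rwa [Nat.factorial_zero, Nat.cast_one, one_mul, zero_add,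
    integral_exp_neg_mul_div_one_add_pow_one hα] at this

/-- Closed form for `I(α,β) = ∫_0^∞ e^{-αx}/(1+x)^β dx` with `β ≥ 2`, in terms of the
exponential integral `E₁(α) = ∫_α^∞ e^{-t}/t dt`. -/
theorem integral_exp_div_pow_closed_form (α : ℝ) (hα : 0 < α) (β : ℕ) (hβ : 2 ≤ β) :
    ∫ x in Set.Ioi (0 : ℝ), Real.exp (-α * x) / (1 + x) ^ β =
      (-1 : ℝ) ^ (β - 1) * α ^ (β - 1) * Real.exp α *
          (∫ t in Set.Ioi α, Real.exp (-t) / t) / (Nat.factorial (β - 1) : ℝ) +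
        ∑ i ∈ Finset.Icc 1 (β - 1),
          ((Nat.factorial (i - 1) : ℝ) / (Nat.factorial (β - 1) : ℝ)) *
            (-1 : ℝ) ^ (β - i - 1) * α ^ (β - i - 1) := by
  obtain ⟨n, rfl⟩ : ∃ n, β = n + 1 := ⟨β - 1, by omega⟩
  have hfac : (n.factorial : ℝ) ≠ 0 := Nat.cast_ne_zero.mpr n.factorial_ne_zero
  have hterm : ∀ k ∈ range n, ((k + 1 - 1).factorial : ℝ) / n.factorial *
      (-1) ^ (n + 1 - (k + 1) - 1) * α ^ (n + 1 - (k + 1) - 1) =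
      (n.factorial : ℝ)⁻¹ * ((-α) ^ (n - 1 - k) * k.factorial) := fun k _ => by
    rw [Nat.add_sub_cancel, Nat.add_sub_add_right, Nat.sub_right_comm, neg_pow]
    ring
  rw [Nat.add_sub_cancel, sum_Icc_one_eq_sum_range_succ, sum_congr rfl hterm, ← mul_sum,
    ← mul_pow, neg_one_mul, mul_assoc, div_eq_inv_mul, ← mul_add,
    ← factorial_mul_integral_exp_neg_mul_div_one_add_pow_succ hα n, inv_mul_cancel_left₀ hfac]
end

section
/- Let Z_1, ..., Z_K be independent with Z_k having continuous strictly increasing CDF F_k, and select k* = argmax_k F_k(Z_k). Then conditioned on k* = k, the CDF of Z_{k*} is (F_k)^K; i.e., P(Z_k ≤ t, k* = k) = (1/K)·(F_k(t))^K. -/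
/-!
By the probability integral transform the variables `U_j = F_j (Z_j)` are independent and
uniform on `[0, 1]`, and the event in question is `U_k ≤ F_k t` with `U_j < U_k` for `j ≠ k`.
Conditioning on `U_k = x`, the other `K - 1` coordinates contribute `x ^ (K - 1)`, so the
probability is `∫₀^{F_k t} x ^ (K - 1) dx = F_k(t) ^ K / K`.
-/

open MeasureTheory ProbabilityTheory Set

namespace ProbabilityTheory

variable {ν : Measure ℝ}

lemma cdf_pos_of_strictMono (h : StrictMono (cdf ν)) (x : ℝ) : 0 < cdf ν x :=
  (cdf_nonneg ν (x - 1)).trans_lt (h (sub_one_lt x))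

lemma cdf_lt_one_of_strictMono (h : StrictMono (cdf ν)) (x : ℝ) : cdf ν x < 1 :=
  (h (lt_add_one x)).trans_le (cdf_le_one ν _)

lemma Ioo_subset_range_cdf (hc : Continuous (cdf ν)) : Ioo 0 1 ⊆ range (cdf ν) := fun _ hu =>
  mem_range_of_exists_le_of_exists_ge hc
    ((tendsto_cdf_atBot ν).eventually (eventually_le_nhds hu.1)).exists
    ((tendsto_cdf_atTop ν).eventually (eventually_ge_nhds hu.2)).exists

lemma measure_cdf_preimage_Iic [IsProbabilityMeasure ν] (hc : Continuous (cdf ν))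
    (hm : StrictMono (cdf ν)) {u : ℝ} (hu : u < 1) :
    ν (cdf ν ⁻¹' Iic u) = ENNReal.ofReal u := by
  rcases le_or_gt u 0 with hu0 | hu0
  · have : cdf ν ⁻¹' Iic u = ∅ :=
      eq_empty_of_forall_notMem fun x hx => (hu0.trans_lt (cdf_pos_of_strictMono hm x)).not_ge hx
    rw [this, measure_empty, ENNReal.ofReal_of_nonpos hu0]
  · obtain ⟨x, rfl⟩ := Ioo_subset_range_cdf hc ⟨hu0, hu⟩
    have : cdf ν ⁻¹' Iic (cdf ν x) = Iic x := by
      ext y; exact hm.le_iff_le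
    rw [this, ofReal_cdf]

theorem map_cdf_eq_restrict_Icc [IsProbabilityMeasure ν] (hc : Continuous (cdf ν))
    (hm : StrictMono (cdf ν)) : ν.map (cdf ν) = volume.restrict (Icc 0 1) := by
  refine Measure.ext_of_Iic _ _ fun u => ?_
  rw [Measure.map_apply hc.measurable measurableSet_Iic,
    Measure.restrict_apply measurableSet_Iic]
  rcases lt_or_ge u 1 with hu | hu
  · have : Iic u ∩ Icc 0 1 = Icc 0 u := by
      ext x; simp only [mem_inter_iff, mem_Iic, mem_Icc]; grind
    rw [measure_cdf_preimage_Iic hc hm hu, this, Real.volume_Icc, sub_zero]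
  · have : cdf ν ⁻¹' Iic u = univ :=
      eq_univ_of_forall fun x => (cdf_lt_one_of_strictMono hm x).le.trans hu
    rw [this, measure_univ, inter_eq_right.2 (fun x hx => hx.2.trans hu), Real.volume_Icc]
    simp

end ProbabilityTheory

namespace MeasureTheory.Measure

lemma pi_le_and_forall_lt_eq_lintegral {n : ℕ} (η : Measure ℝ) [SigmaFinite η]
    (k : Fin (n + 1)) (c : ℝ) :
    Measure.pi (fun _ => η) {z | z k ≤ c ∧ ∀ j ≠ k, z j < z k} =
      ∫⁻ x in Iic c, η (Iio x) ^ n ∂η := by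
  set S : Set (ℝ × (Fin n → ℝ)) := {p | p.1 ≤ c ∧ ∀ i, p.2 i < p.1}
  have hS : MeasurableSet S := by measurability
  have hpre : {z : Fin (n + 1) → ℝ | z k ≤ c ∧ ∀ j ≠ k, z j < z k} =
      MeasurableEquiv.piFinSuccAbove (fun _ => ℝ) k ⁻¹' S := by
    ext z
    simp [S, k.forall_iff_succAbove, Fin.removeNth_apply]
  have hslice (x : ℝ) : Prod.mk x ⁻¹' S = if x ≤ c then univ.pi fun _ => Iio x else ∅ := by
    split_ifs with hx <;> ext y <;> simp [S, hx]
  rw [hpre,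
    (measurePreserving_piFinSuccAbove (fun _ => η) k).measure_preimage hS.nullMeasurableSet,
    prod_apply hS, ← lintegral_indicator measurableSet_Iic]
  refine lintegral_congr fun x => ?_
  rw [hslice]
  split_ifs with hx
  · simp [indicator_of_mem (show x ∈ Iic c from hx)]
  · simp [indicator_of_notMem (show x ∉ Iic c from hx)]

end MeasureTheory.Measure

lemma setLIntegral_Iic_measure_Iio_pow_restrict_Icc (n : ℕ) {c : ℝ} (hc0 : 0 ≤ c)
    (hc1 : c ≤ 1) :
    ∫⁻ x in Iic c, volume.restrict (Icc 0 1) (Iio x) ^ n ∂(volume.restrict (Icc 0 1)) =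
      ENNReal.ofReal (c ^ (n + 1) / (n + 1)) := by
  have hdom : Iic c ∩ Icc 0 1 = Icc 0 c := by
    ext x; simp only [mem_inter_iff, mem_Iic, mem_Icc]; grind
  have hIio : ∀ x ∈ Icc 0 c,
      volume.restrict (Icc 0 1) (Iio x) ^ n = ENNReal.ofReal (x ^ n) := by
    intro x hx
    have : Iio x ∩ Icc 0 1 = Ico 0 x := by
      ext y; simp only [mem_inter_iff, mem_Iio, mem_Icc, mem_Ico]; grind
    rw [Measure.restrict_apply measurableSet_Iio, this, Real.volume_Ico, sub_zero,
      ENNReal.ofReal_pow hx.1]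
  rw [Measure.restrict_restrict measurableSet_Iic, hdom,
    setLIntegral_congr_fun measurableSet_Icc hIio,
    ← ofReal_integral_eq_lintegral_ofReal, integral_Icc_eq_integral_Ioc,
    ← intervalIntegral.integral_of_le hc0, integral_pow]
  · simp
  · exact (continuous_pow n).integrableOn_Icc
  · exact (ae_restrict_iff' measurableSet_Icc).2 (.of_forall fun x hx => pow_nonneg hx.1 n)

theorem cdf_scheduling_selected_cdf_general
    {Ω : Type*} [MeasurableSpace Ω] (μ : Measure Ω) [IsProbabilityMeasure μ]
    (K : ℕ) (Z : Fin K → Ω → ℝ) (hZ : ∀ k, Measurable (Z k))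
    (hindep : iIndepFun Z μ)
    (F : Fin K → ℝ → ℝ)
    (hFdef : ∀ k, ∀ x : ℝ, F k x = (μ {ω | Z k ω ≤ x}).toReal)
    (hFcont : ∀ k, Continuous (F k)) (hFmono : ∀ k, StrictMono (F k)) :
    ∀ (k : Fin K) (t : ℝ),
      μ {ω | Z k ω ≤ t ∧ ∀ j : Fin K, j ≠ k → F j (Z j ω) < F k (Z k ω)} =
        ENNReal.ofReal ((1 / (K : ℝ)) * (F k t) ^ K) := by
  intro k t
  obtain ⟨n, rfl⟩ := Nat.exists_eq_add_one_of_ne_zero k.pos.ne'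
  have hF_cdf (j : Fin (n + 1)) : F j = cdf (μ.map (Z j)) := by
    have := Measure.isProbabilityMeasure_map (μ := μ) (hZ j).aemeasurable
    ext x
    rw [hFdef, cdf_eq_real, map_measureReal_apply (hZ j) measurableSet_Iic, measureReal_def]
    rfl
  have hU (j : Fin (n + 1)) : Measurable fun ω => F j (Z j ω) :=
    (hFcont j).measurable.comp (hZ j)
  have hU_law (j : Fin (n + 1)) : μ.map (fun ω => F j (Z j ω)) = volume.restrict (Icc 0 1) := by
    have := Measure.isProbabilityMeasure_map (μ := μ) (hZ j).aemeasurable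
    refine (Measure.map_map (hFcont j).measurable (hZ j)).symm.trans ?_
    rw [hF_cdf j]
    exact map_cdf_eq_restrict_Icc (hF_cdf j ▸ hFcont j) (hF_cdf j ▸ hFmono j)
  have hjoint :
      μ.map (fun ω j => F j (Z j ω)) = Measure.pi fun _ => volume.restrict (Icc 0 1) := by
    rw [(hindep.comp F fun j => (hFcont j).measurable).map_fun_eq_pi_map
      fun j => (hU j).aemeasurable, funext hU_law]
  have hevent : {ω | Z k ω ≤ t ∧ ∀ j, j ≠ k → F j (Z j ω) < F k (Z k ω)} =
      (fun ω j => F j (Z j ω)) ⁻¹' {z | z k ≤ F k t ∧ ∀ j ≠ k, z j < z k} := by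
    ext ω
    simp [(hFmono k).le_iff_le]
  have hFt : 0 ≤ F k t ∧ F k t ≤ 1 := by
    rw [hF_cdf]; exact ⟨cdf_nonneg _ _, cdf_le_one _ _⟩
  rw [hevent, ← Measure.map_apply (measurable_pi_lambda _ hU) (by measurability), hjoint,
    Measure.pi_le_and_forall_lt_eq_lintegral,
    setLIntegral_Iic_measure_Iio_pow_restrict_Icc n hFt.1 hFt.2]
  congr 1
  push_cast
  ring

/-- Conditioned on user `k` being selected by CDF-based scheduling, its SINR has CDF
`(F_k)^K`: namely `P(Z_k ≤ t, k* = k) = (1/K)(F_k(t))^K`. -/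
theorem cdf_scheduling_selected_cdf
    {Ω : Type*} [MeasurableSpace Ω] (μ : Measure Ω) [IsProbabilityMeasure μ]
    (K : ℕ) (hK : 1 ≤ K) (Z : Fin K → Ω → ℝ) (hZ : ∀ k, Measurable (Z k))
    (hindep : iIndepFun Z μ)
    (F : Fin K → ℝ → ℝ)
    (hFdef : ∀ k, ∀ x : ℝ, F k x = (μ {ω | Z k ω ≤ x}).toReal)
    (hFcont : ∀ k, Continuous (F k)) (hFmono : ∀ k, StrictMono (F k)) :
    ∀ (k : Fin K) (t : ℝ),
      μ {ω | Z k ω ≤ t ∧ ∀ j : Fin K, j ≠ k → F j (Z j ω) < F k (Z k ω)} =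
        ENNReal.ofReal ((1 / (K : ℝ)) * (F k t) ^ K) :=
  cdf_scheduling_selected_cdf_general μ K Z hZ hindep F hFdef hFcont hFmono
end

section
/- With the definition J(ε) = ∫_0^∞ log₂(1+x) d(F_Z(x))^ε for F_Z(x) = 1 - e^{-(M/ρ)x}(1+x)^{-(M-1)}, one has the closed form J(ε) = (ε/ln 2)·Σ_{i=0}^{ε-1} C(ε-1, i)·((-1)^i/(i+1))·I(M(i+1)/ρ, (M-1)(i+1)+1), where I(α,β) = ∫_0^∞ e^{-αx}(1+x)^{-β} dx. -/
/-!
Write `H_{b,k}(x) = e^{-bx} (1+x)^{-k}` (`decay b k`), so that `1 - F_Z = H_{M/ρ, M-1}`,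
`H_{b,k}^j = H_{jb, jk}` and `I(α, β) = ∫_0^∞ H_{α,β}`. The binomial theorem expands `F_Z^ε`
into `1 + Σ_{j=1}^ε (-1)^j C(ε,j) H_{jM/ρ, j(M-1)}`, which can be differentiated term by term.
Integration by parts turns each `∫_0^∞ log(1+x) H'_{b,k}(x) dx` into
`-∫_0^∞ H_{b,k}(x)/(1+x) dx = -I(b, k+1)`, the boundary terms vanishing because `log(1+x) ≤ x`.
Finally `C(ε, j) = ε/j · C(ε-1, j-1)`.
-/

open MeasureTheory Finset Real Filter Set
open scoped Topology

noncomputable def decay (b : ℝ) (k : ℕ) (x : ℝ) : ℝ := exp (-b * x) / (1 + x) ^ k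

lemma decay_pow (b : ℝ) (k i : ℕ) (x : ℝ) : decay b k x ^ i = decay (b * i) (k * i) x := by
  rw [decay, decay, div_pow, ← exp_nat_mul, ← pow_mul]
  ring_nf

lemma decay_succ (b : ℝ) (k : ℕ) (x : ℝ) :
    decay b (k + 1) x = (1 + x)⁻¹ * decay b k x := by
  rw [decay, decay, pow_succ]
  field_simp

section decay

variable {b : ℝ} {k : ℕ} {x : ℝ}

lemma decay_nonneg (hx : 0 ≤ x) : 0 ≤ decay b k x := by
  unfold decay
  positivity

lemma decay_le_exp (hx : 0 ≤ x) : decay b k x ≤ exp (-b * x) :=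
  div_le_self (exp_pos _).le (one_le_pow₀ (by linarith))

lemma hasDerivAt_decay (hx : 1 + x ≠ 0) :
    HasDerivAt (decay b k) (-(b + k / (1 + x)) * decay b k x) x := by
  have hexp : HasDerivAt (fun y => exp (-b * y)) (exp (-b * x) * -b) x := by
    simpa using ((hasDerivAt_id x).const_mul (-b)).exp
  have hpow : HasDerivAt (fun y => (1 + y) ^ k) (k * (1 + x) ^ (k - 1) * 1) x :=
    ((hasDerivAt_id x).const_add 1).pow k
  refine (hexp.div hpow (pow_ne_zero k hx)).congr_deriv ?_
  rcases k with _ | k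
  · simp [decay, mul_comm]
  · simp only [decay, Nat.add_sub_cancel, pow_succ]
    field_simp
    ring

lemma abs_deriv_decay_le (hb : 0 ≤ b) (hx : 0 ≤ x) :
    |deriv (decay b k) x| ≤ (b + k) * exp (-b * x) := by
  have hx1 : 0 < 1 + x := by linarith
  have hk : (k : ℝ) / (1 + x) ≤ k := div_le_self k.cast_nonneg (by linarith)
  rw [(hasDerivAt_decay hx1.ne').deriv, abs_mul, abs_neg, abs_of_nonneg (by positivity),
    abs_of_nonneg (decay_nonneg hx)]
  exact mul_le_mul (by linarith) (decay_le_exp hx) (decay_nonneg hx) (by positivity)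

end decay

lemma one_sub_decay_pow (b : ℝ) (k n : ℕ) (x : ℝ) :
    (1 - decay b k x) ^ n =
      1 + ∑ i ∈ range n,
        (-1 : ℝ) ^ (i + 1) * n.choose (i + 1) * decay (b * (i + 1)) (k * (i + 1)) x := by
  rw [sub_eq_neg_add, add_pow, sum_range_succ', add_comm]
  congr 1
  · simp
  · refine sum_congr rfl fun i _ => ?_
    rw [neg_pow, decay_pow]
    push_cast
    ring

lemma hasDerivAt_one_sub_decay_pow (b : ℝ) (k n : ℕ) {x : ℝ} (hx : 1 + x ≠ 0) :
    HasDerivAt (fun y => (1 - decay b k y) ^ n)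
      (∑ i ∈ range n, (-1 : ℝ) ^ (i + 1) * n.choose (i + 1) *
        deriv (decay (b * (i + 1)) (k * (i + 1))) x) x := by
  simp_rw [one_sub_decay_pow]
  refine ((hasDerivAt_const x (1 : ℝ)).add (HasDerivAt.fun_sum fun i _ => ?_)).congr_deriv
    (zero_add _)
  exact ((hasDerivAt_decay hx).differentiableAt.hasDerivAt).const_mul _

lemma abs_log_one_add_le {x : ℝ} (hx : 0 ≤ x) : |log (1 + x)| ≤ x := by
  rw [abs_of_nonneg (log_nonneg (by linarith))]
  linarith [log_le_sub_one_of_pos (show 0 < 1 + x by linarith)]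

section integral

variable {b : ℝ} (hb : 0 < b) (k : ℕ)
include hb

lemma integrableOn_decay : IntegrableOn (decay b k) (Ioi 0) := by
  refine (exp_neg_integrableOn_Ioi 0 hb).mono'
    (Measurable.aestronglyMeasurable (by unfold decay; fun_prop)) ?_
  filter_upwards [ae_restrict_mem measurableSet_Ioi] with x (hx : 0 < x)
  rw [norm_of_nonneg (decay_nonneg hx.le)]
  exact decay_le_exp hx.le

lemma integrableOn_log_one_add_mul_deriv_decay :
    IntegrableOn (fun x => log (1 + x) * deriv (decay b k) x) (Ioi 0) := by
  have hdom :
      IntegrableOn (fun x : ℝ => (b + k) * (x ^ (1 : ℝ) * exp (-b * x ^ (1 : ℝ)))) (Ioi 0) :=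
    (integrableOn_rpow_mul_exp_neg_mul_rpow (by norm_num) one_pos hb).const_mul _
  refine hdom.mono' (by fun_prop) ?_
  filter_upwards [ae_restrict_mem measurableSet_Ioi] with x (hx : 0 < x)
  rw [norm_mul, rpow_one, mul_left_comm]
  exact mul_le_mul (abs_log_one_add_le hx.le) (abs_deriv_decay_le hb.le hx.le) (abs_nonneg _) hx.le

lemma tendsto_log_one_add_mul_decay_atTop :
    Tendsto (fun x => log (1 + x) * decay b k x) atTop (𝓝 0) := by
  have hlim := tendsto_rpow_mul_exp_neg_mul_atTop_nhds_zero 1 b hb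
  simp only [rpow_one] at hlim
  refine squeeze_zero_norm' ?_ hlim
  filter_upwards [eventually_ge_atTop 0] with x hx
  rw [norm_mul]
  exact mul_le_mul (abs_log_one_add_le hx) ((norm_of_nonneg (decay_nonneg hx)).trans_le
    (decay_le_exp hx)) (norm_nonneg _) hx

lemma integral_log_one_add_mul_deriv_decay :
    ∫ x in Ioi 0, log (1 + x) * deriv (decay b k) x = -∫ x in Ioi 0, decay b (k + 1) x := by
  have hu : ∀ x ∈ Ioi (0 : ℝ), HasDerivAt (fun y => log (1 + y)) (1 + x)⁻¹ x :=
    fun x (hx : 0 < x) => by simpa using ((hasDerivAt_id x).const_add 1).log (by positivity)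
  have hv : ∀ x ∈ Ioi (0 : ℝ), HasDerivAt (decay b k) (deriv (decay b k) x) x :=
    fun x (hx : 0 < x) => (hasDerivAt_decay (by positivity)).differentiableAt.hasDerivAt
  have hu'v : IntegrableOn (fun x => (1 + x)⁻¹ * decay b k x) (Ioi 0) := by
    simpa only [← funext (decay_succ b k)] using integrableOn_decay hb (k + 1)
  have hzero : Tendsto (fun x => log (1 + x) * decay b k x) (𝓝[>] 0) (𝓝 0) := by
    have hcont : ContinuousAt (fun x => log (1 + x) * decay b k x) 0 :=
      ((continuous_const.add continuous_id).continuousAt.log (by norm_num)).mul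
        (hasDerivAt_decay (by norm_num)).continuousAt
    simpa using hcont.tendsto.mono_left nhdsWithin_le_nhds
  rw [integral_Ioi_mul_deriv_eq_deriv_mul hu hv (integrableOn_log_one_add_mul_deriv_decay hb k)
    hu'v hzero (tendsto_log_one_add_mul_decay_atTop hb k)]
  simp only [decay_succ, sub_self, zero_sub]

end integral

lemma cast_choose_succ (n i : ℕ) :
    (n.choose (i + 1) : ℝ) = n / (i + 1) * (n - 1).choose i := by
  rcases n with _ | n
  · simp
  · have := Nat.add_one_mul_choose_eq n i
    rw [Nat.add_sub_cancel]
    field_simp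
    exact_mod_cast this.symm

theorem J_closed_form_general (M : ℕ) (hM : 1 ≤ M) (ρ : ℝ) (hρ : 0 < ρ) (ε : ℕ) :
    (∫ x in Set.Ioi (0 : ℝ), Real.logb 2 (1 + x) *
        deriv (fun y => (1 - Real.exp (-((M : ℝ) / ρ) * y) / (1 + y) ^ (M - 1)) ^ ε) x) =
      ((ε : ℝ) / Real.log 2) * ∑ i ∈ Finset.range ε,
        ((ε - 1).choose i : ℝ) * ((-1 : ℝ) ^ i / (i + 1)) *
          ∫ x in Set.Ioi (0 : ℝ),
            Real.exp (-((M : ℝ) * (i + 1) / ρ) * x) / (1 + x) ^ ((M - 1) * (i + 1) + 1) := by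
  set a : ℝ := (M : ℝ) / ρ with ha_def
  have hb (i : ℕ) : 0 < a * (i + 1) :=
    mul_pos (div_pos (by exact_mod_cast hM) hρ) (by positivity)
  set c : ℕ → ℝ := fun i => (-1) ^ (i + 1) * ε.choose (i + 1) / log 2
  have hexpand : EqOn (fun x => logb 2 (1 + x) * deriv (fun y => (1 - decay a (M - 1) y) ^ ε) x)
      (fun x => ∑ i ∈ range ε,
        c i * (log (1 + x) * deriv (decay (a * (i + 1)) ((M - 1) * (i + 1))) x)) (Ioi 0) := by
    intro x (hx : 0 < x)
    dsimp only
    rw [(hasDerivAt_one_sub_decay_pow a (M - 1) ε (by positivity)).deriv, logb, mul_sum]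
    exact sum_congr rfl fun i _ => by ring
  change ∫ x in Ioi 0, logb 2 (1 + x) * deriv (fun y => (1 - decay a (M - 1) y) ^ ε) x = _
  rw [setIntegral_congr_fun measurableSet_Ioi hexpand, integral_finsetSum _ fun i _ =>
    (integrableOn_log_one_add_mul_deriv_decay (hb i) _).const_mul (c i), mul_sum]
  refine sum_congr rfl fun i _ => ?_
  have hI : (fun x => exp (-((M : ℝ) * (i + 1) / ρ) * x) / (1 + x) ^ ((M - 1) * (i + 1) + 1)) =
      decay (a * (i + 1)) ((M - 1) * (i + 1) + 1) := by
    funext x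
    rw [decay, ha_def]
    ring_nf
  rw [integral_const_mul, integral_log_one_add_mul_deriv_decay (hb i), hI]
  simp only [c, cast_choose_succ]
  field_simp
  ring

/-- Closed form of `J(ε) = ∫_0^∞ log₂(1+x) d(F_Z(x))^ε` for the SINR CDF
`F_Z(x) = 1 - e^{-(M/ρ)x}(1+x)^{-(M-1)}`, in terms of
`I(α,β) = ∫_0^∞ e^{-αx}(1+x)^{-β} dx`. -/
theorem J_closed_form (M : ℕ) (hM : 1 ≤ M) (ρ : ℝ) (hρ : 0 < ρ) (ε : ℕ) (hε : 1 ≤ ε) :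
    (∫ x in Set.Ioi (0 : ℝ), Real.logb 2 (1 + x) *
        deriv (fun y => (1 - Real.exp (-((M : ℝ) / ρ) * y) / (1 + y) ^ (M - 1)) ^ ε) x) =
      ((ε : ℝ) / Real.log 2) * ∑ i ∈ Finset.range ε,
        ((ε - 1).choose i : ℝ) * ((-1 : ℝ) ^ i / (i + 1)) *
          ∫ x in Set.Ioi (0 : ℝ),
            Real.exp (-((M : ℝ) * (i + 1) / ρ) * x) / (1 + x) ^ ((M - 1) * (i + 1) + 1) :=
  J_closed_form_general M hM ρ hρ ε
end

section
/- Let ξ₁(N, L, ℓ) = Σ_{i=ℓ}^{L-1} ((L-i)/L)·C(N, i)·C(i, ℓ)·(-1)^{i-ℓ}. Then Σ_{ℓ=0}^{L-1} ξ₁(N, L, ℓ) = 1 for all integers 1 ≤ L ≤ N. -/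
/-!
After exchanging the two sums, the inner sum over `ℓ` is the alternating binomial sum
`∑_ℓ C(i,ℓ) (-1)^(i-ℓ) = (1 - 1)^i = 0^i`, so only the term `i = 0` survives, and it equals
`(L - 0) / L = 1`.
-/

open Finset

theorem sum_range_choose_mul_neg_one_pow_sub {R : Type*} [CommRing R] (n : ℕ) :
    ∑ k ∈ range (n + 1), (n.choose k : R) * (-1) ^ (n - k) = 0 ^ n := by
  simpa [mul_comm] using (add_pow (1 : R) (-1) n).symm

theorem sum_range_sum_Icc_sub_one_comm {M : Type*} [AddCommMonoid M] (L : ℕ)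
    (f : ℕ → ℕ → M) :
    ∑ l ∈ range L, ∑ i ∈ Icc l (L - 1), f l i = ∑ i ∈ range L, ∑ l ∈ range (i + 1), f l i := by
  have hIcc : ∀ l ∈ range L, Icc l (L - 1) = Ico l L := fun l hl => by
    refine Icc_sub_one_right_eq_Ico_of_not_isMin ?_ l
    rw [isMin_iff_eq_bot, Nat.bot_eq_zero]
    exact Nat.ne_zero_of_lt (mem_range.1 hl)
  rw [sum_congr rfl fun l hl => by rw [hIcc l hl]]
  simpa only [range_eq_Ico] using sum_Ico_Ico_comm 0 L f

theorem xi1_sum_eq_one_general (N L : ℕ) (hL : 1 ≤ L) :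
    ∑ l ∈ Finset.range L,
      (∑ i ∈ Finset.Icc l (L - 1),
        (((L : ℝ) - i) / L) * (N.choose i : ℝ) * (i.choose l : ℝ) * (-1 : ℝ) ^ (i - l)) = 1 := by
  rw [sum_range_sum_Icc_sub_one_comm]
  have hinner : ∀ i, ∑ l ∈ range (i + 1),
      ((L : ℝ) - i) / L * N.choose i * i.choose l * (-1) ^ (i - l)
        = ((L : ℝ) - i) / L * N.choose i * 0 ^ i := fun i => by
    simp_rw [mul_assoc, ← mul_sum, sum_range_choose_mul_neg_one_pow_sub]
  simp_rw [hinner]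
  rw [sum_eq_single_of_mem 0 (mem_range.2 hL) fun i _ hi => by simp [hi]]
  have hL0 : (L : ℝ) ≠ 0 := by positivity
  simp [hL0]

/-- The best-L selective feedback coefficients
`ξ₁(N,L,ℓ) = Σ_{i=ℓ}^{L-1} ((L-i)/L) C(N,i) C(i,ℓ) (-1)^{i-ℓ}` sum to one. -/
theorem xi1_sum_eq_one (N L : ℕ) (hL : 1 ≤ L) (hLN : L ≤ N) :
    ∑ l ∈ Finset.range L,
      (∑ i ∈ Finset.Icc l (L - 1),
        (((L : ℝ) - i) / L) * (N.choose i : ℝ) * (i.choose l : ℝ) * (-1 : ℝ) ^ (i - l)) = 1 :=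
  xi1_sum_eq_one_general N L hL
end

section
/- For L = N, the coefficients ξ₁(N, N, ℓ) = Σ_{i=ℓ}^{N-1} ((N-i)/N)·C(N,i)·C(i,ℓ)·(-1)^{i-ℓ} satisfy ξ₁(N, N, N-1) = 1 and ξ₁(N, N, ℓ) = 0 for 0 ≤ ℓ ≤ N-2. -/
open Finset

/-! Since `(N - i) / N · C(N, i) = C(N - 1, i)`, the coefficients `ξ₁(N, N, ℓ)` are the entries
`Σᵢ (-1)^(i-ℓ) C(n, i) C(i, ℓ)` (with `n = N - 1`) of the product of the inverse Pascal matrix with the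
Pascal matrix, i.e. `δ(n, ℓ)`: after `C(n, i) C(i, ℓ) = C(n, ℓ) C(n - ℓ, i - ℓ)` the sum is
`C(n, ℓ) (1 - 1)^(n - ℓ)`. -/

theorem cast_sub_div_mul_choose_succ {K : Type*} [Field K] [CharZero K] (n i : ℕ) :
    (((n + 1 : ℕ) : K) - i) / (n + 1 : ℕ) * ((n + 1).choose i : ℕ) = (n.choose i : K) := by
  rcases le_or_gt i (n + 1) with hi | hi
  · have h : (n.choose i : K) * (n + 1 : ℕ) = ((n + 1).choose i : ℕ) * ((n + 1 : ℕ) - i : K) := by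
      rw [← Nat.cast_sub hi, ← Nat.cast_mul, ← Nat.cast_mul, Nat.choose_mul_succ_eq]
    field_simp
    linear_combination -h
  · simp [Nat.choose_eq_zero_of_lt hi, Nat.choose_eq_zero_of_lt (Nat.lt_of_succ_lt hi)]

theorem sum_Icc_choose_mul_choose_mul_neg_one_pow {R : Type*} [CommRing R] (n l : ℕ) :
    ∑ i ∈ Icc l n, (n.choose i : R) * (i.choose l : R) * (-1) ^ (i - l) = if n = l then 1 else 0 := by
  rcases le_or_gt l n with hl | hl
  · have hchoose : ∀ i ∈ Icc l n, (n.choose i : R) * (i.choose l : R) * (-1) ^ (i - l)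
        = (n.choose l : R) * ((-1) ^ (i - l) * ((n - l).choose (i - l) : R)) := by
      intro i hi
      rw [← Nat.cast_mul, Nat.choose_mul (mem_Icc.mp hi).1, Nat.cast_mul]
      ring
    have halt : ∑ j ∈ range (n - l + 1), ((-1) ^ j * ((n - l).choose j : R))
        = if n - l = 0 then 1 else 0 := by
      exact_mod_cast congrArg (Int.cast : ℤ → R) (Int.alternating_sum_range_choose (n := n - l))
    rw [sum_congr rfl hchoose, ← mul_sum, ← Ico_add_one_right_eq_Icc, sum_Ico_eq_sum_range]
    simp only [Nat.add_sub_cancel_left, Nat.sub_add_comm hl, halt]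
    rcases eq_or_ne n l with rfl | hne
    · simp
    · simp [hne, Nat.sub_ne_zero_of_lt (lt_of_le_of_ne hl hne.symm)]
  · simp [Icc_eq_empty_of_lt hl, hl.ne]

/-- For full spectral feedback `L = N`:
`ξ₁(N,N,N-1) = 1` and `ξ₁(N,N,ℓ) = 0` for `0 ≤ ℓ ≤ N-2`. -/
theorem xi1_full_feedback (N : ℕ) (hN : 1 ≤ N) :
    (∑ i ∈ Finset.Icc (N - 1) (N - 1),
        (((N : ℝ) - i) / N) * (N.choose i : ℝ) * (i.choose (N - 1) : ℝ) * (-1 : ℝ) ^ (i - (N - 1)))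
      = 1 ∧
    ∀ l : ℕ, l + 2 ≤ N →
      (∑ i ∈ Finset.Icc l (N - 1),
        (((N : ℝ) - i) / N) * (N.choose i : ℝ) * (i.choose l : ℝ) * (-1 : ℝ) ^ (i - l)) = 0 := by
  obtain ⟨n, rfl⟩ := Nat.exists_eq_add_of_le' hN
  have xi1_eq (l : ℕ) : ∑ i ∈ Icc l n, (((n + 1 : ℕ) : ℝ) - i) / (n + 1 : ℕ) *
      ((n + 1).choose i : ℝ) * (i.choose l : ℝ) * (-1 : ℝ) ^ (i - l) = if n = l then 1 else 0 := by
    simp only [cast_sub_div_mul_choose_succ, sum_Icc_choose_mul_choose_mul_neg_one_pow]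
  simp only [Nat.add_sub_cancel]
  refine ⟨by rw [xi1_eq, if_pos rfl], fun l hl => by rw [xi1_eq, if_neg (by omega)]⟩
end

section
/- Let F : ℝ → [0,1] be a CDF with F(x) < 1 for all x and F(x) → 1 as x → ∞, and let coefficients c_ℓ (0 ≤ ℓ ≤ L-1) satisfy Σ_ℓ c_ℓ = 1. Define G(x) = Σ_{ℓ=0}^{L-1} c_ℓ F(x)^{N-ℓ} and s = N - Σ_{ℓ=0}^{L-1} c_ℓ·ℓ. Then lim_{x→∞} (1 - G(x))/(1 - F(x)^s) = 1, i.e., G is tail equivalent to F^s. -/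
/-!
Put `P(t) = Σ_{ℓ<L} c_ℓ t^{N-ℓ}` and `Q(t) = t^s`, so that the quotient is `(1 - P(F x))/(1 - Q(F x))`.
Both `P` and `Q` take the value `1` at `t = 1` and have derivative `s` there, because `Σ c_ℓ = 1`.
The quotient of their difference quotients at `1` therefore tends to `s / s = 1` as `t → 1`,
and `F x → 1` with `F x ≠ 1`.
-/

open Filter Topology Finset

theorem HasDerivAt.tendsto_sub_div_sub {𝕜 : Type*} [NontriviallyNormedField 𝕜] {f g : 𝕜 → 𝕜}
    {f' g' a : 𝕜} (hf : HasDerivAt f f' a) (hg : HasDerivAt g g' a) (hg' : g' ≠ 0) :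
    Tendsto (fun t => (f t - f a) / (g t - g a)) (𝓝[≠] a) (𝓝 (f' / g')) := by
  refine ((hasDerivAt_iff_tendsto_slope.mp hf).div
    (hasDerivAt_iff_tendsto_slope.mp hg) hg').congr' ?_
  filter_upwards [self_mem_nhdsWithin] with t ht
  rw [Pi.div_apply, slope_def_field, slope_def_field, div_div_div_cancel_right₀ (sub_ne_zero.mpr ht)]

theorem hasDerivAt_sum_mul_pow_one {𝕜 ι : Type*} [NontriviallyNormedField 𝕜] (S : Finset ι)
    (c : ι → 𝕜) (n : ι → ℕ) :
    HasDerivAt (fun t => ∑ i ∈ S, c i * t ^ n i) (∑ i ∈ S, c i * n i) 1 := by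
  simpa using HasDerivAt.fun_sum fun i _ => (hasDerivAt_pow (n i) (1 : 𝕜)).const_mul (c i)

theorem sum_mul_natCast_sub_of_sum_eq_one {N L : ℕ} (hLN : L ≤ N) {c : ℕ → ℝ}
    (hc : ∑ l ∈ range L, c l = 1) :
    ∑ l ∈ range L, c l * ((N - l : ℕ) : ℝ) = N - ∑ l ∈ range L, c l * l := by
  have hcast : ∀ l ∈ range L, c l * ((N - l : ℕ) : ℝ) = c l * N - c l * l := fun l hl => by
    rw [Nat.cast_sub (by have := mem_range.mp hl; omega)]
    ring
  rw [sum_congr rfl hcast, sum_sub_distrib, ← sum_mul, hc, one_mul]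

theorem best_L_tail_equivalence_general (N L : ℕ) (hLN : L ≤ N)
    (F : ℝ → ℝ) (hlt : ∀ x, F x < 1)
    (htop : Tendsto F atTop (nhds 1))
    (c : ℕ → ℝ) (hc : ∑ l ∈ Finset.range L, c l = 1)
    (s : ℝ) (hs : s = (N : ℝ) - ∑ l ∈ Finset.range L, c l * l) (hspos : 0 < s) :
    Tendsto (fun x =>
        (1 - ∑ l ∈ Finset.range L, c l * F x ^ (N - l)) / (1 - F x ^ s))
      atTop (nhds 1) := by
  have hP : HasDerivAt (fun t : ℝ => ∑ l ∈ range L, c l * t ^ (N - l)) s 1 := by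
    rw [hs, ← sum_mul_natCast_sub_of_sum_eq_one hLN hc]
    exact hasDerivAt_sum_mul_pow_one _ c (N - ·)
  have hQ : HasDerivAt (fun t : ℝ => t ^ s) s 1 := by
    simpa using Real.hasDerivAt_rpow_const (x := 1) (p := s) (Or.inl one_ne_zero)
  have hF : Tendsto F atTop (𝓝[≠] 1) :=
    tendsto_nhdsWithin_of_tendsto_nhds_of_eventually_within _ htop
      (Eventually.of_forall fun x => (hlt x).ne)
  have hquot := (hP.tendsto_sub_div_sub hQ hspos.ne').comp hF
  rw [div_self hspos.ne'] at hquot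
  refine hquot.congr fun x => ?_
  simp only [Function.comp_apply, one_pow, mul_one, hc, Real.one_rpow]
  rw [← neg_div_neg_eq, neg_sub, neg_sub]

/-- Tail equivalence of the best-L feedback CDF
`G = Σ_{ℓ<L} c_ℓ F^{N-ℓ}` with `F^s`, where `s = N - Σ_{ℓ<L} c_ℓ ℓ`:
`(1 - G(x))/(1 - F(x)^s) → 1` as `x → ∞`. -/
theorem best_L_tail_equivalence (N L : ℕ) (hL : 1 ≤ L) (hLN : L ≤ N)
    (F : ℝ → ℝ) (hmono : Monotone F) (hlt : ∀ x, F x < 1) (hpos : ∀ x, 0 < F x)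
    (htop : Tendsto F atTop (nhds 1))
    (c : ℕ → ℝ) (hc : ∑ l ∈ Finset.range L, c l = 1)
    (s : ℝ) (hs : s = (N : ℝ) - ∑ l ∈ Finset.range L, c l * l) (hspos : 0 < s) :
    Tendsto (fun x =>
        (1 - ∑ l ∈ Finset.range L, c l * F x ^ (N - l)) / (1 - F x ^ s))
      atTop (nhds 1) :=
  best_L_tail_equivalence_general N L hLN F hlt htop c hc s hs hspos
end

section
/- Let U and V be distribution functions that are tail equivalent, i.e., lim_{x→∞} (1-U(x))/(1-V(x)) = 1, and suppose there are constants a_K ∈ ℝ, b_K > 0 with U^K(a_K + b_K x) → G(x) pointwise at continuity points, G nondegenerate. Then V^K(a_K + b_K x) → G(x) at continuity points of G. -/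
/-!
Write `c_K = a_K + b_K x` and `L = G x`. For a sequence `v_K ∈ [0, 1]` the limit of `v_K ^ K`
is governed by `K (1 - v_K)`, because `log v ~ v - 1` as `v → 1`: `v_K ^ K → L > 0` iff
`K (1 - v_K) → -log L`, and `v_K ^ K → 0` iff `K (1 - v_K) → ∞`.

If `L > 0`, then `U (c_K) → 1`, so `c_K → ∞` and tail equivalence makes `K (1 - U (c_K))` and
`K (1 - V (c_K))` asymptotically equivalent. If `L = 0`, the points `c_K` need not escape to
infinity; instead, tail equivalence together with monotonicity of `V` gives a uniform bound
`δ (1 - U) ≤ 1 - V`, which is enough to push `K (1 - V (c_K))` to `∞` as well.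
-/

open Filter Topology Asymptotics

theorem Real.isEquivalent_log_sub_one : log ~[𝓝 1] fun y => y - 1 := by
  unfold IsEquivalent
  refine (hasDerivAt_iff_isLittleO.1 (hasDerivAt_log one_ne_zero)).congr_left fun y => ?_
  simp

theorem Monotone.tendsto_atTop_of_tendsto_comp_of_lt {α β γ : Type*} [LinearOrder α]
    [LinearOrder β] [TopologicalSpace β] [OrderTopology β] {f : α → β} {b : β}
    {l : Filter γ} {c : γ → α} (hf : Monotone f) (hlt : ∀ x, f x < b)
    (h : Tendsto (f ∘ c) l (𝓝 b)) : Tendsto c l atTop := by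
  refine tendsto_atTop.2 fun x => ?_
  filter_upwards [h.eventually_const_lt (hlt x)] with y hy
  exact hf.reflect_lt hy |>.le

section PowSeq

variable {v : ℕ → ℝ}

theorem tendsto_one_of_tendsto_pow {L : ℝ} (hv : ∀ n, 0 ≤ v n) (hL : 0 < L)
    (h : Tendsto (fun n => v n ^ n) atTop (𝓝 L)) : Tendsto v atTop (𝓝 1) := by
  have hroot := h.rpow (tendsto_inv_atTop_zero.comp tendsto_natCast_atTop_atTop) (.inl hL.ne')
  rw [Real.rpow_zero] at hroot
  refine hroot.congr' ?_
  filter_upwards [eventually_ne_atTop 0] with n hn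
  exact Real.pow_rpow_inv_natCast (hv n) hn

theorem tendsto_pow_iff_tendsto_mul_one_sub {L : ℝ} (hv : ∀ n, 0 ≤ v n) (hL : 0 < L) :
    Tendsto (fun n => v n ^ n) atTop (𝓝 L) ↔
      Tendsto (fun n : ℕ => (n : ℝ) * (1 - v n)) atTop (𝓝 (-Real.log L)) := by
  constructor
  · intro h
    have hlog : Tendsto (fun n : ℕ => (n : ℝ) * Real.log (v n)) atTop (𝓝 (Real.log L)) :=
      ((Real.continuousAt_log hL.ne').tendsto.comp h).congr fun n => by simp [Real.log_pow]
    have hequiv : (fun n : ℕ => (n : ℝ) * Real.log (v n)) ~[atTop]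
        fun n => (n : ℝ) * (v n - 1) :=
      IsEquivalent.refl.mul
        (Real.isEquivalent_log_sub_one.comp_tendsto (tendsto_one_of_tendsto_pow hv hL h))
    simpa [mul_sub, neg_sub] using (hequiv.tendsto_nhds hlog).neg
  · intro h
    have hg : Tendsto (fun n : ℕ => (n : ℝ) * (v n - 1)) atTop (𝓝 (Real.log L)) := by
      simpa only [neg_neg, ← mul_neg, neg_sub] using h.neg
    simpa [Real.exp_log hL] using Real.tendsto_one_add_pow_exp_of_tendsto hg

theorem tendsto_pow_nhds_zero_iff_tendsto_mul_one_sub_atTop (hv : ∀ n, 0 ≤ v n) :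
    Tendsto (fun n => v n ^ n) atTop (𝓝 0) ↔
      Tendsto (fun n : ℕ => (n : ℝ) * (1 - v n)) atTop atTop := by
  constructor
  · intro h
    refine tendsto_atTop.2 fun T => ?_
    -- Below `T`, `v n ^ n` would stay above `(1 - T / n) ^ n → exp (-T) > 0`.
    have hexp := Real.tendsto_one_add_div_pow_exp (-T)
    filter_upwards [hexp.eventually_const_lt (half_lt_self (Real.exp_pos (-T))),
      h.eventually_lt_const (half_pos (Real.exp_pos (-T))),
      tendsto_natCast_atTop_atTop.eventually_ge_atTop (max T 1)] with n hlow hsmall hn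
    by_contra! hlt
    have hn0 : (0 : ℝ) < n := lt_of_lt_of_le one_pos ((le_max_right _ _).trans hn)
    have hbase : 0 ≤ 1 + -T / n := by
      have : -1 ≤ -T / n := by rw [le_div_iff₀ hn0]; linarith [le_max_left T 1]
      linarith
    have hvn : 1 + -T / n ≤ v n := by
      have : -T / n ≤ v n - 1 := by rw [div_le_iff₀ hn0]; linarith
      linarith
    linarith [pow_le_pow_left₀ hbase hvn n]
  · intro h
    have hbound : ∀ n, v n ^ n ≤ Real.exp (-((n : ℝ) * (1 - v n))) := fun n => by
      calc v n ^ n ≤ Real.exp (-(1 - v n)) ^ n :=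
            pow_le_pow_left₀ (hv n) (by linarith [Real.add_one_le_exp (-(1 - v n))]) n
        _ = Real.exp (-((n : ℝ) * (1 - v n))) := by rw [← Real.exp_nat_mul]; ring_nf
    exact tendsto_of_tendsto_of_tendsto_of_le_of_le tendsto_const_nhds
      (Real.tendsto_exp_atBot.comp (tendsto_neg_atTop_atBot.comp h))
      (fun n => pow_nonneg (hv n) n) hbound

end PowSeq

theorem exists_pos_mul_one_sub_le_one_sub {U V : ℝ → ℝ} (hU0 : ∀ x, 0 ≤ U x)
    (hU1 : ∀ x, U x < 1) (hVmono : Monotone V) (hV1 : ∀ x, V x < 1)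
    (htail : Tendsto (fun x => (1 - U x) / (1 - V x)) atTop (𝓝 1)) :
    ∃ δ > 0, ∀ y, δ * (1 - U y) ≤ 1 - V y := by
  obtain ⟨M, hM⟩ := eventually_atTop.1 (htail.eventually_lt_const one_lt_two)
  refine ⟨min (1 / 2) (1 - V M), lt_min one_half_pos (sub_pos.2 (hV1 M)), fun y => ?_⟩
  have hVy : 0 < 1 - V y := sub_pos.2 (hV1 y)
  have hUy : 0 ≤ 1 - U y := sub_nonneg.2 (hU1 y).le
  rcases le_or_gt M y with hy | hy
  · calc min (1 / 2) (1 - V M) * (1 - U y) ≤ 1 / 2 * (1 - U y) :=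
          mul_le_mul_of_nonneg_right (min_le_left _ _) hUy
      _ ≤ 1 - V y := by linarith [(div_lt_iff₀ hVy).1 (hM y hy)]
  · calc min (1 / 2) (1 - V M) * (1 - U y) ≤ min (1 / 2) (1 - V M) :=
          mul_le_of_le_one_right (le_min one_half_pos.le (sub_pos.2 (hV1 M)).le)
            (by linarith [hU0 y])
      _ ≤ 1 - V M := min_le_right _ _
      _ ≤ 1 - V y := by linarith [hVmono hy.le]

theorem tail_equivalence_theorem_general
    (U V : ℝ → ℝ) (hUmono : Monotone U) (hVmono : Monotone V)
    (hU0 : ∀ x, 0 ≤ U x) (hV0 : ∀ x, 0 ≤ V x)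
    (hU1 : ∀ x, U x < 1) (hV1 : ∀ x, V x < 1)
    (htail : Tendsto (fun x => (1 - U x) / (1 - V x)) atTop (nhds 1))
    (a : ℕ → ℝ) (b : ℕ → ℝ)
    (G : ℝ → ℝ)
    (hconv : ∀ x, ContinuousAt G x →
      Tendsto (fun K => U (a K + b K * x) ^ K) atTop (nhds (G x))) :
    ∀ x, ContinuousAt G x →
      Tendsto (fun K => V (a K + b K * x) ^ K) atTop (nhds (G x)) := by
  intro x hx
  have hU : Tendsto (fun K => U (a K + b K * x) ^ K) atTop (𝓝 (G x)) := hconv x hx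
  rcases (ge_of_tendsto' hU fun K => pow_nonneg (hU0 _) K).lt_or_eq with hG | hG
  · have hu := (tendsto_pow_iff_tendsto_mul_one_sub (fun K => hU0 _) hG).1 hU
    have hc : Tendsto (fun K => a K + b K * x) atTop atTop :=
      hUmono.tendsto_atTop_of_tendsto_comp_of_lt hU1
        (tendsto_one_of_tendsto_pow (fun K => hU0 _) hG hU)
    have hequiv : (fun K => 1 - U (a K + b K * x)) ~[atTop] fun K => 1 - V (a K + b K * x) :=
      isEquivalent_of_tendsto_one (htail.comp hc)
    exact (tendsto_pow_iff_tendsto_mul_one_sub (fun K => hV0 _) hG).2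
      ((IsEquivalent.refl.mul hequiv).tendsto_nhds hu)
  · rw [← hG] at hU ⊢
    obtain ⟨δ, hδ, hle⟩ := exists_pos_mul_one_sub_le_one_sub hU0 hU1 hVmono hV1 htail
    have hu := (tendsto_pow_nhds_zero_iff_tendsto_mul_one_sub_atTop (fun K => hU0 _)).1 hU
    refine (tendsto_pow_nhds_zero_iff_tendsto_mul_one_sub_atTop (fun K => hV0 _)).2
      (tendsto_atTop_mono (fun K => ?_) (hu.const_mul_atTop hδ))
    rw [mul_left_comm]
    exact mul_le_mul_of_nonneg_left (hle _) K.cast_nonneg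

/-- Resnick's tail equivalence theorem: if CDFs `U` and `V` are tail equivalent and
`U^K(a_K + b_K x) → G(x)` at continuity points with `G` nondegenerate, then also
`V^K(a_K + b_K x) → G(x)` at continuity points of `G`. -/
theorem tail_equivalence_theorem
    (U V : ℝ → ℝ) (hUmono : Monotone U) (hVmono : Monotone V)
    (hU0 : ∀ x, 0 ≤ U x) (hV0 : ∀ x, 0 ≤ V x)
    (hU1 : ∀ x, U x < 1) (hV1 : ∀ x, V x < 1)
    (hUtop : Tendsto U atTop (nhds 1)) (hVtop : Tendsto V atTop (nhds 1))
    (htail : Tendsto (fun x => (1 - U x) / (1 - V x)) atTop (nhds 1))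
    (a : ℕ → ℝ) (b : ℕ → ℝ) (hb : ∀ K, 0 < b K)
    (G : ℝ → ℝ) (hGnondeg : ∃ x y, G x ≠ G y)
    (hconv : ∀ x, ContinuousAt G x →
      Tendsto (fun K => U (a K + b K * x) ^ K) atTop (nhds (G x))) :
    ∀ x, ContinuousAt G x →
      Tendsto (fun K => V (a K + b K * x) ^ K) atTop (nhds (G x)) :=
  tail_equivalence_theorem_general U V hUmono hVmono hU0 hV0 hU1 hV1 htail a b G hconv
end

section
/- If Λ_K is the maximum of K i.i.d. random variables with CDF F, and (Λ_K - a_K)/b_K converges weakly to a nondegenerate G, and κ(K) is a sequence of random sample sizes with κ(K)/K → θ in probability for a positive random variable θ independent of the samples, then P(Λ_{κ(K)} < a_K + b_K x) → ∫ G(x)^y dP(θ < y). -/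
/-!
Independence of the index from the sample gives `P(Λ_{κ_K} < u_K) = E[φ_K(κ_K)]` with
`φ_K(n) = P(Λ_n < u_K) = p_K ^ n` for `n ≥ 1`, where `u_K = a_K + b_K x`, `p_K = F(u_K)` and
`p_K ^ K → G(x)`. Along a subsequence on which `κ_K / K → θ` almost surely,
`p_K ^ κ_K = (p_K ^ K) ^ (κ_K / K) → G(x) ^ θ` by continuity of `(u, t) ↦ u ^ t` at `t > 0`,
and bounded convergence gives `E[φ_K(κ_K)] → E[G(x) ^ θ]`; since every subsequence has such a
further subsequence, the whole sequence converges.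
-/
open MeasureTheory ProbabilityTheory Filter
open scoped Topology

theorem setOf_iSup_fin_lt_eq_biInter {Ω : Type*} {X : ℕ → Ω → ℝ} {n : ℕ} (hn : n ≠ 0) (r : ℝ) :
    {ω | ⨆ i : Fin n, X i ω < r} = ⋂ i ∈ Finset.range n, X i ⁻¹' Set.Iio r := by
  have : NeZero n := ⟨hn⟩
  ext ω
  simp only [Set.mem_ofPred_eq, Set.mem_iInter, Finset.mem_range, Set.mem_preimage, Set.mem_Iio]
  constructor
  · intro h i hi
    exact (le_ciSup (Set.finite_range _).bddAbove (⟨i, hi⟩ : Fin n)).trans_lt h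
  · intro h
    obtain ⟨i, hi⟩ := exists_eq_ciSup_of_finite (f := fun i : Fin n => X i ω)
    exact hi ▸ h i i.isLt

theorem tendsto_pow_of_tendsto_pow_of_tendsto_div {ι : Type*} {l : Filter ι} {p : ι → ℝ}
    {N k : ι → ℕ} {c t : ℝ} (hp : ∀ i, 0 ≤ p i) (hN : ∀ᶠ i in l, N i ≠ 0)
    (hpN : Tendsto (fun i => p i ^ N i) l (𝓝 c))
    (hk : Tendsto (fun i => (k i : ℝ) / N i) l (𝓝 t)) (ht : 0 < t) :
    Tendsto (fun i => p i ^ k i) l (𝓝 (c ^ t)) := by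
  have hrpow : Tendsto (fun i => (p i ^ N i) ^ ((k i : ℝ) / N i)) l (𝓝 (c ^ t)) :=
    (Real.continuousAt_rpow (c, t) (Or.inr ht)).tendsto.comp (hpN.prodMk_nhds hk)
  refine hrpow.congr' (hN.mono fun i hi => ?_)
  rw [← Real.rpow_natCast (p i) (N i), ← Real.rpow_mul (hp i),
    mul_div_cancel₀ _ (Nat.cast_ne_zero.mpr hi), Real.rpow_natCast]

theorem ProbabilityTheory.Indep.measure_setOf_mem_apply_eq_lintegral {Ω ι : Type*}
    [Countable ι] [MeasurableSpace ι] [MeasurableSingletonClass ι] {m₁ m : MeasurableSpace Ω}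
    {μ : Measure Ω} {A : ι → Set Ω} {N : Ω → ι} (hN : Measurable N)
    (hind : Indep m₁ (MeasurableSpace.comap N inferInstance) μ) (hm₁ : m₁ ≤ m)
    (hA : ∀ i, MeasurableSet[m₁] (A i)) :
    μ {ω | ω ∈ A (N ω)} = ∫⁻ ω, μ (A (N ω)) ∂μ := by
  have hunion : {ω | ω ∈ A (N ω)} = ⋃ i, A i ∩ N ⁻¹' {i} := by
    ext ω; simp
  have hdisj : Pairwise (Function.onFun Disjoint fun i => A i ∩ N ⁻¹' {i}) :=
    fun i j hij => Set.disjoint_left.mpr fun ω hi hj => hij (hi.2.symm.trans hj.2)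
  rw [hunion, measure_iUnion hdisj fun i => (hm₁ _ (hA i)).inter (hN (measurableSet_singleton i)),
    ← lintegral_map (f := fun i => μ (A i)) (measurable_of_countable _) hN, lintegral_countable']
  refine tsum_congr fun i => ?_
  rw [Measure.map_apply hN (measurableSet_singleton i)]
  exact (Indep_iff _ _ _).mp hind _ _ (hA i) ⟨{i}, measurableSet_singleton i, rfl⟩

theorem ProbabilityTheory.Indep.measureReal_setOf_mem_apply_eq_integral {Ω ι : Type*}
    [Countable ι] [MeasurableSpace ι] [MeasurableSingletonClass ι] {m₁ m : MeasurableSpace Ω}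
    {μ : Measure Ω} [IsFiniteMeasure μ] {A : ι → Set Ω} {N : Ω → ι} (hN : Measurable N)
    (hind : Indep m₁ (MeasurableSpace.comap N inferInstance) μ) (hm₁ : m₁ ≤ m)
    (hA : ∀ i, MeasurableSet[m₁] (A i)) :
    μ.real {ω | ω ∈ A (N ω)} = ∫ ω, μ.real (A (N ω)) ∂μ := by
  rw [measureReal_def, hind.measure_setOf_mem_apply_eq_lintegral hN hm₁ hA]
  exact (integral_toReal ((measurable_of_countable (fun i => μ (A i))).comp hN).aemeasurable
    (ae_of_all _ fun _ => measure_lt_top μ _)).symm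

section

variable {Ω : Type*} [MeasurableSpace Ω] {μ : Measure Ω}

theorem ProbabilityTheory.iIndepFun.measureReal_iSup_fin_lt {X : ℕ → Ω → ℝ}
    (hindep : iIndepFun X μ) (hident : ∀ i, IdentDistrib (X i) (X 0) μ μ) {n : ℕ}
    (hn : n ≠ 0) (r : ℝ) :
    μ.real {ω | ⨆ i : Fin n, X i ω < r} = μ.real {ω | X 0 ω < r} ^ n := by
  rw [setOf_iSup_fin_lt_eq_biInter hn, measureReal_def,
    hindep.meas_biInter fun i _ => ⟨Set.Iio r, measurableSet_Iio, rfl⟩,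
    Finset.prod_congr rfl fun i _ => (hident i).measure_mem_eq measurableSet_Iio,
    Finset.prod_const, Finset.card_range, ENNReal.toReal_pow]
  rfl

theorem ProbabilityTheory.Indep.measureReal_iSup_fin_lt_eq_integral [IsFiniteMeasure μ]
    {X : ℕ → Ω → ℝ} (hX : ∀ i, Measurable (X i)) {N : Ω → ℕ} (hN : Measurable N)
    (hind : Indep (MeasurableSpace.comap (fun ω (i : ℕ) => X i ω) inferInstance)
      (MeasurableSpace.comap N inferInstance) μ) (r : ℝ) :
    μ.real {ω | ⨆ i : Fin (N ω), X i ω < r}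
      = ∫ ω, μ.real {ω' | ⨆ i : Fin (N ω), X i ω' < r} ∂μ :=
  hind.measureReal_setOf_mem_apply_eq_integral hN (measurable_pi_lambda _ hX).comap_le
    fun n => measurableSet_lt (Measurable.iSup fun i : Fin n =>
      (measurable_pi_apply (i : ℕ)).comp (comap_measurable fun ω (i : ℕ) => X i ω))
      measurable_const

theorem tendsto_integral_of_forall_subseq_ae {E : Type*} [NormedAddCommGroup E] [NormedSpace ℝ E]
    [IsFiniteMeasure μ] {F : ℕ → Ω → E} {f : Ω → E} {C : ℝ}
    (hF : ∀ n, AEStronglyMeasurable (F n) μ) (hC : ∀ n, ∀ᵐ ω ∂μ, ‖F n ω‖ ≤ C)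
    (hsub : ∀ ns : ℕ → ℕ, Tendsto ns atTop atTop →
      ∃ ms : ℕ → ℕ, ∀ᵐ ω ∂μ, Tendsto (fun k => F (ns (ms k)) ω) atTop (𝓝 (f ω))) :
    Tendsto (fun n => ∫ ω, F n ω ∂μ) atTop (𝓝 (∫ ω, f ω ∂μ)) :=
  tendsto_of_subseq_tendsto fun ns hns =>
    let ⟨ms, hms⟩ := hsub ns hns
    ⟨ms, tendsto_integral_of_dominated_convergence (fun _ => C) (fun _ => hF _)
      (integrable_const C) (fun _ => hC _) hms⟩

theorem tendsto_integral_comp_of_tendstoInMeasure_div [IsFiniteMeasure μ] {φ : ℕ → ℕ → ℝ}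
    {p : ℕ → ℝ} {c C : ℝ} {κ : ℕ → Ω → ℕ} {θ : Ω → ℝ} (hφ : ∀ K n, n ≠ 0 → φ K n = p K ^ n)
    (hp : ∀ K, 0 ≤ p K) (hφC : ∀ K n, ‖φ K n‖ ≤ C) (hpK : Tendsto (fun K => p K ^ K) atTop (𝓝 c))
    (hκ : ∀ K, Measurable (κ K))
    (hκθ : TendstoInMeasure μ (fun K ω => (κ K ω : ℝ) / K) atTop θ) (hθ : ∀ᵐ ω ∂μ, 0 < θ ω) :
    Tendsto (fun K => ∫ ω, φ K (κ K ω) ∂μ) atTop (𝓝 (∫ ω, c ^ θ ω ∂μ)) := by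
  refine tendsto_integral_of_forall_subseq_ae (C := C)
    (fun K => ((measurable_of_countable (φ K)).comp (hκ K)).aestronglyMeasurable)
    (fun K => ae_of_all _ fun ω => hφC K _) fun ns hns => ?_
  obtain ⟨ms, hms, hae⟩ := (hκθ.comp hns).exists_seq_tendsto_ae
  have hN := hns.comp hms.tendsto_atTop
  refine ⟨ms, ?_⟩
  filter_upwards [hae, hθ] with ω hratio hθω
  have hκ_ne : ∀ᶠ k in atTop, κ (ns (ms k)) ω ≠ 0 :=
    (hratio.eventually (eventually_gt_nhds hθω)).mono fun k hk h0 => by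
      simp only [Function.comp_apply, h0, Nat.cast_zero, zero_div, lt_irrefl] at hk
  exact (tendsto_pow_of_tendsto_pow_of_tendsto_div (fun _ => hp _) (hN.eventually_ne_atTop 0)
    (hpK.comp hN) hratio hθω).congr' (hκ_ne.mono fun k hk => (hφ _ _ hk).symm)

end

theorem extremes_random_sample_size_general
    {Ω : Type*} [MeasurableSpace Ω] (μ : Measure Ω) [IsProbabilityMeasure μ]
    (X : ℕ → Ω → ℝ) (hX : ∀ i, Measurable (X i))
    (hindep : iIndepFun X μ)
    (hident : ∀ i, IdentDistrib (X i) (X 0) μ μ)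
    (Λ : ℕ → Ω → ℝ) (hΛ : ∀ n ω, Λ n ω = ⨆ i : Fin n, X i ω)
    (a : ℕ → ℝ) (b : ℕ → ℝ) (hb : ∀ K, 0 < b K)
    (G : ℝ → ℝ)
    (hconv : ∀ x, ContinuousAt G x →
      Tendsto (fun K => (μ {ω | (Λ K ω - a K) / b K < x}).toReal) atTop (nhds (G x)))
    (κ : ℕ → Ω → ℕ) (hκ : ∀ K, Measurable (κ K))
    (θ : Ω → ℝ) (hθpos : ∀ᵐ ω ∂μ, 0 < θ ω)
    (hprob : ∀ ε : ℝ, 0 < ε →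
      Tendsto (fun K => μ {ω | ε ≤ |(κ K ω : ℝ) / K - θ ω|}) atTop (nhds 0))
    (hindep2 : Indep
      (MeasurableSpace.comap (fun ω (i : ℕ) => X i ω) inferInstance)
      (MeasurableSpace.comap (fun ω => ((fun K => κ K ω, θ ω) : (ℕ → ℕ) × ℝ)) inferInstance)
      μ) :
    ∀ x, ContinuousAt G x →
      Tendsto (fun K => (μ {ω | Λ (κ K ω) ω < a K + b K * x}).toReal) atTop
        (nhds (∫ ω, G x ^ (θ ω) ∂μ)) := by
  obtain rfl : Λ = fun n ω => ⨆ i : Fin n, X i ω := funext₂ hΛ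
  intro x hx
  -- `⨆` over `Fin 0` is the junk value `0`, so the product formula needs `n ≠ 0`.
  have hφ : ∀ K n, n ≠ 0 → μ.real {ω | ⨆ i : Fin n, X i ω < a K + b K * x}
      = μ.real {ω | X 0 ω < a K + b K * x} ^ n := fun K n hn =>
    hindep.measureReal_iSup_fin_lt hident hn _
  have hpK : Tendsto (fun K => μ.real {ω | X 0 ω < a K + b K * x} ^ K) atTop (𝓝 (G x)) := by
    refine (hconv x hx).congr' ((eventually_ne_atTop 0).mono fun K hK => ?_)
    simp_rw [div_lt_iff₀ (hb K), sub_lt_iff_lt_add', mul_comm x]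
    exact hφ K K hK
  have hκ_indep : ∀ K, Indep (MeasurableSpace.comap (fun ω (i : ℕ) => X i ω) inferInstance)
      (MeasurableSpace.comap (κ K) inferInstance) μ := fun K =>
    indep_of_indep_of_le_right hindep2 (Measurable.comap_le <|
      ((measurable_pi_apply K).comp measurable_fst).comp
        (comap_measurable fun ω => ((fun K => κ K ω, θ ω) : (ℕ → ℕ) × ℝ)))
  refine (tendsto_integral_comp_of_tendstoInMeasure_div (C := 1) hφ
    (fun _ => measureReal_nonneg)
    (fun _ _ => (Real.norm_of_nonneg measureReal_nonneg).trans_le measureReal_le_one) hpK hκ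
    (tendstoInMeasure_iff_dist.mpr hprob) hθpos).congr fun K =>
    ((hκ_indep K).measureReal_iSup_fin_lt_eq_integral hX (hκ K) _).symm

/-- Berman's theorem on extremes with random sample size: if the normalized maximum
`(Λ_K - a_K)/b_K` of i.i.d. variables converges weakly to a nondegenerate `G`, and
`κ(K)/K → θ` in probability with `θ > 0` a.s. and `(κ, θ)` independent of the samples,
then `P(Λ_{κ(K)} < a_K + b_K x) → ∫ G(x)^y dP(θ < y) = E[G(x)^θ]`. -/
theorem extremes_random_sample_size
    {Ω : Type*} [MeasurableSpace Ω] (μ : Measure Ω) [IsProbabilityMeasure μ]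
    (X : ℕ → Ω → ℝ) (hX : ∀ i, Measurable (X i))
    (hindep : iIndepFun X μ)
    (hident : ∀ i, IdentDistrib (X i) (X 0) μ μ)
    (Λ : ℕ → Ω → ℝ) (hΛ : ∀ n ω, Λ n ω = ⨆ i : Fin n, X i ω)
    (a : ℕ → ℝ) (b : ℕ → ℝ) (hb : ∀ K, 0 < b K)
    (G : ℝ → ℝ) (hGnondeg : ∃ x y, G x ≠ G y)
    (hconv : ∀ x, ContinuousAt G x →
      Tendsto (fun K => (μ {ω | (Λ K ω - a K) / b K < x}).toReal) atTop (nhds (G x)))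
    (κ : ℕ → Ω → ℕ) (hκ : ∀ K, Measurable (κ K))
    (θ : Ω → ℝ) (hθ : Measurable θ) (hθpos : ∀ᵐ ω ∂μ, 0 < θ ω)
    (hprob : ∀ ε : ℝ, 0 < ε →
      Tendsto (fun K => μ {ω | ε ≤ |(κ K ω : ℝ) / K - θ ω|}) atTop (nhds 0))
    (hindep2 : Indep
      (MeasurableSpace.comap (fun ω (i : ℕ) => X i ω) inferInstance)
      (MeasurableSpace.comap (fun ω => ((fun K => κ K ω, θ ω) : (ℕ → ℕ) × ℝ)) inferInstance)
      μ) :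
    ∀ x, ContinuousAt G x →
      Tendsto (fun K => (μ {ω | Λ (κ K ω) ω < a K + b K * x}).toReal) atTop
        (nhds (∫ ω, G x ^ (θ ω) ∂μ)) :=
  extremes_random_sample_size_general μ X hX hindep hident Λ hΛ a b hb G hconv κ hκ θ hθpos hprob
    hindep2
end

section
/- The CDF F_Z(x) = 1 - e^{-(M/ρ)x}(1+x)^{-(M-1)} belongs to the domain of attraction of the Gumbel distribution: with a_K satisfying F_Z(a_K) = 1 - 1/K and b_K = g(a_K) where g(x) = (1-F_Z(x))/f_Z(x), one has (F_Z(a_K + b_K x))^K → exp(-e^{-x}) for all x; moreover lim_{x→∞} g(x) = ρ/M so one may take b_K = ρ/M eventually. -/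
/-!
Write `c = M/ρ` and `m = M - 1`, so that `1 - F_Z(x) = e^{-cx}/(1+x)^m` and
`g(x) = (1+x)/(c(1+x)+m) → 1/c = ρ/M`. Since `(1+x)^m e^{cx}` is bounded on every half-line
`(-∞, C]`, the identity `K = (1+a_K)^m e^{c a_K}` forces `a_K → ∞`. Then `b_K x → ρx/M`, and the
polynomial factor of the tail is negligible against the exponential one, so
`K (1 - F_Z(a_K + b_K x)) = (1 - F_Z(a_K + b_K x)) / (1 - F_Z(a_K)) → e^{-x}`; the Poisson limit
`(1 - t_K/K)^K → e^{-t}` for `t_K → t` finishes the proof.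
-/

open Filter Real Topology
open scoped Nat

noncomputable def sinrTail (c : ℝ) (m : ℕ) (x : ℝ) : ℝ := exp (-c * x) / (1 + x) ^ m

-- Unconditional: at `x = -1` both sides are `0` because `0⁻¹ = 0`.
lemma sinrTail_inv (c : ℝ) (m : ℕ) (x : ℝ) :
    (sinrTail c m x)⁻¹ = (1 + x) ^ m * exp (c * x) := by
  rw [sinrTail, inv_div, div_eq_mul_inv, ← exp_neg, neg_mul, neg_neg]

lemma sinrTail_div_density (c : ℝ) (m : ℕ) {x : ℝ} (hx : 1 + x ≠ 0) :
    sinrTail c m x / (exp (-c * x) / (1 + x) ^ (m + 1) * (c * (1 + x) + m)) =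
      (1 + x) / (c * (1 + x) + m) := by
  rw [sinrTail, pow_succ]
  field_simp [exp_ne_zero]

lemma tendsto_div_mul_add_atTop {c : ℝ} (hc : c ≠ 0) (k : ℝ) :
    Tendsto (fun y => y / (c * y + k)) atTop (𝓝 c⁻¹) := by
  have h : Tendsto (fun y => c + k / y) atTop (𝓝 c) := by
    simpa using tendsto_const_nhds.add ((tendsto_const_nhds (x := k)).div_atTop tendsto_id)
  refine (h.inv₀ hc).congr' ?_
  filter_upwards [eventually_ne_atTop 0] with y hy
  field_simp

lemma one_add_pow_mul_exp_le {c C y : ℝ} (m : ℕ) (hc : 0 < c) (hC : 0 ≤ C) (hy : y ≤ C) :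
    (1 + y) ^ m * exp (c * y) ≤ m ! / c ^ m * exp (c * (1 + 2 * C)) := by
  have hpow : |1 + y| ^ m ≤ m ! / c ^ m * exp (c * |1 + y|) := by
    have h := pow_div_factorial_le_exp _ (mul_nonneg hc.le (abs_nonneg (1 + y))) m
    rw [mul_pow, div_le_iff₀ (by positivity)] at h
    rw [div_mul_eq_mul_div, le_div_iff₀ (by positivity)]
    linarith
  have habs : |1 + y| + y ≤ 1 + 2 * C := by cases abs_cases (1 + y) <;> linarith
  calc (1 + y) ^ m * exp (c * y) ≤ |1 + y| ^ m * exp (c * y) :=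
        mul_le_mul_of_nonneg_right ((le_abs_self _).trans (abs_pow _ _).le) (exp_pos _).le
    _ ≤ m ! / c ^ m * exp (c * |1 + y|) * exp (c * y) := by gcongr
    _ = m ! / c ^ m * exp (c * (|1 + y| + y)) := by rw [mul_add, exp_add]; ring
    _ ≤ m ! / c ^ m * exp (c * (1 + 2 * C)) := by gcongr

lemma tendsto_atTop_of_sinrTail_eq_inv {c : ℝ} (hc : 0 < c) (m : ℕ) {a : ℕ → ℝ}
    (ha : ∀ᶠ K : ℕ in atTop, sinrTail c m (a K) = (K : ℝ)⁻¹) : Tendsto a atTop atTop := by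
  rw [tendsto_atTop]
  intro C
  have hbig : ∀ᶠ K : ℕ in atTop, m ! / c ^ m * exp (c * (1 + 2 * max C 0)) < K :=
    tendsto_natCast_atTop_atTop.eventually_gt_atTop _
  filter_upwards [ha, hbig] with K hK hKbig
  by_contra! hlt
  have hK_eq : (K : ℝ) = (1 + a K) ^ m * exp (c * a K) := by rw [← sinrTail_inv, hK, inv_inv]
  have := one_add_pow_mul_exp_le m hc (le_max_right C 0) (hlt.le.trans (le_max_left C 0))
  linarith

lemma tendsto_sinrTail_add_div {ι : Type*} {l : Filter ι} (c : ℝ) (m : ℕ) {a d : ι → ℝ}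
    {δ : ℝ} (ha : Tendsto a l atTop) (hd : Tendsto d l (𝓝 δ)) :
    Tendsto (fun i => sinrTail c m (a i + d i) / sinrTail c m (a i)) l (𝓝 (exp (-c * δ))) := by
  have hrel : Tendsto (fun i => 1 + d i / (1 + a i)) l (𝓝 1) := by
    simpa using tendsto_const_nhds.add
      (hd.div_atTop (tendsto_atTop_add_const_left _ 1 ha))
  have hlim : Tendsto (fun i => exp (-c * d i) / (1 + d i / (1 + a i)) ^ m) l
      (𝓝 (exp (-c * δ) / 1 ^ m)) :=
    ((continuous_exp.tendsto _).comp (hd.const_mul (-c))).div (hrel.pow m) (by simp)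
  rw [one_pow, div_one] at hlim
  refine hlim.congr' ?_
  filter_upwards [ha.eventually_gt_atTop (-1)] with i hi
  have hi' : 1 + a i ≠ 0 := by linarith
  have hsplit : 1 + d i / (1 + a i) = (1 + (a i + d i)) / (1 + a i) := by field_simp; ring
  rw [hsplit, div_pow, sinrTail, sinrTail, mul_add, exp_add]
  field_simp [exp_ne_zero]

lemma tendsto_pow_of_tendsto_tail_ratio {F : ℝ → ℝ} {a z : ℕ → ℝ} {t : ℝ}
    (ha : ∀ᶠ K : ℕ in atTop, 1 - F (a K) = (K : ℝ)⁻¹)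
    (hz : Tendsto (fun K => (1 - F (z K)) / (1 - F (a K))) atTop (𝓝 t)) :
    Tendsto (fun K => F (z K) ^ K) atTop (𝓝 (exp (-t))) := by
  have h : Tendsto (fun K : ℕ => (K : ℝ) * (F (z K) - 1)) atTop (𝓝 (-t)) := by
    refine hz.neg.congr' ?_
    filter_upwards [ha] with K hK
    rw [hK, div_inv_eq_mul]
    ring
  exact (tendsto_one_add_pow_exp_of_tendsto h).congr fun K => by ring_nf

/-- The SINR CDF `F_Z(x) = 1 - e^{-(M/ρ)x}(1+x)^{-(M-1)}` is in the Gumbel domain of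
attraction: with `a_K` chosen so `F_Z(a_K) = 1 - 1/K` and `b_K = g(a_K)` where
`g = (1 - F_Z)/f_Z`, one has `(F_Z(a_K + b_K x))^K → exp(-e^{-x})`; moreover
`g(x) → ρ/M` as `x → ∞`. -/
theorem sinr_gumbel_domain (M : ℕ) (hM : 1 ≤ M) (ρ : ℝ) (hρ : 0 < ρ)
    (F f g : ℝ → ℝ)
    (hF : ∀ x, F x = 1 - Real.exp (-((M : ℝ) / ρ) * x) / (1 + x) ^ (M - 1))
    (hf : ∀ x, f x = Real.exp (-((M : ℝ) / ρ) * x) / (1 + x) ^ M *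
      (((M : ℝ) / ρ) * (1 + x) + (M : ℝ) - 1))
    (hg : ∀ x, g x = (1 - F x) / f x)
    (a : ℕ → ℝ) (ha : ∀ K : ℕ, 1 ≤ K → F (a K) = 1 - 1 / (K : ℝ))
    (b : ℕ → ℝ) (hb : ∀ K, b K = g (a K)) :
    (∀ x : ℝ, Tendsto (fun K : ℕ => (F (a K + b K * x)) ^ K) atTop
        (nhds (Real.exp (-Real.exp (-x))))) ∧
      Tendsto g atTop (nhds (ρ / M)) := by
  obtain ⟨m, rfl⟩ : ∃ m, M = m + 1 := ⟨M - 1, by omega⟩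
  set c : ℝ := ((m + 1 : ℕ) : ℝ) / ρ with hc_def
  have hc : 0 < c := by positivity
  have hsurv : ∀ x, 1 - F x = sinrTail c m x := fun x => by
    rw [hF, sub_sub_cancel, Nat.add_sub_cancel, sinrTail]
  have hg_eq : ∀ x, -1 < x → g x = (1 + x) / (c * (1 + x) + m) := fun x hx => by
    rw [hg, hsurv, hf, ← sinrTail_div_density c m (by linarith : 1 + x ≠ 0)]
    push_cast
    ring_nf
  have hg_lim : Tendsto g atTop (𝓝 (ρ / (m + 1 : ℕ))) := by
    rw [← inv_div]
    refine ((tendsto_div_mul_add_atTop hc.ne' m).comp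
      (tendsto_atTop_add_const_left _ 1 tendsto_id)).congr' ?_
    filter_upwards [eventually_gt_atTop (-1)] with x hx
    exact (hg_eq x hx).symm
  have ha_inv : ∀ᶠ K : ℕ in atTop, 1 - F (a K) = (K : ℝ)⁻¹ := by
    filter_upwards [eventually_ge_atTop 1] with K hK
    rw [ha K hK, sub_sub_cancel, one_div]
  have ha_top : Tendsto a atTop atTop :=
    tendsto_atTop_of_sinrTail_eq_inv hc m (ha_inv.mono fun K hK => hsurv (a K) ▸ hK)
  have hb_lim : Tendsto b atTop (𝓝 (ρ / (m + 1 : ℕ))) :=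
    (hg_lim.comp ha_top).congr fun K => (hb K).symm
  refine ⟨fun x => tendsto_pow_of_tendsto_tail_ratio ha_inv ?_, hg_lim⟩
  have hcx : -c * (ρ / (m + 1 : ℕ) * x) = -x := by rw [hc_def]; field_simp
  simpa only [hsurv, hcx] using tendsto_sinrTail_add_div c m ha_top (hb_lim.mul_const x)
end
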